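/- For any x ∈ ℝᵈ, xᵀ Φᵀ D (I − Π P) Φ x = ‖Φx‖²_Dir + (μᵀΦx)². -/

import Mathlib

/-!
Stationarity `μᵀP = μ` gives `(I - eμᵀ)P = P - eμᵀ`, so the matrix in the quadratic form is
`D(I - P) + Deμᵀ = D(I - P) + μμᵀ`, and the second summand contributes `(μᵀf)²` with `f = Φx`.
For the first, expand `(f s - f s')²`: weighted by `μ s P s s'`, both square terms sum to
`∑ μ s (f s)²`, by row-stochasticity and by stationarity respectively, leaving twice
`fᵀD(I - P)f`.
-/

open Matrix BigOperators Finset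

variable {ι : Type*} [Fintype ι]

noncomputable def dirichletForm (P : Matrix ι ι ℝ) (μ f : ι → ℝ) : ℝ :=
  (1 / 2) * ∑ s, ∑ s', μ s * P s s' * (f s - f s') ^ 2

lemma one_sub_vecMulVec_mul_of_vecMul_eq [DecidableEq ι] (P : Matrix ι ι ℝ) {μ : ι → ℝ}
    (hstat : μ ᵥ* P = μ) :
    (1 - vecMulVec (fun _ => (1 : ℝ)) μ) * P = P - vecMulVec (fun _ => 1) μ := by
  rw [Matrix.sub_mul, Matrix.one_mul, vecMulVec_mul, hstat]

lemma dotProduct_transpose_mul_mul_mulVec {κ : Type*} [Fintype κ] (Φ : Matrix ι κ ℝ)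
    (M : Matrix ι ι ℝ) (x : κ → ℝ) :
    x ⬝ᵥ ((Φᵀ * M * Φ) *ᵥ x) = (Φ *ᵥ x) ⬝ᵥ (M *ᵥ (Φ *ᵥ x)) := by
  rw [← mulVec_mulVec, ← mulVec_mulVec, dotProduct_mulVec, vecMul_transpose]

lemma dotProduct_diagonal_mul_vecMulVec_one_mulVec [DecidableEq ι] (μ f : ι → ℝ) :
    f ⬝ᵥ ((diagonal μ * vecMulVec (fun _ => 1) μ) *ᵥ f) = (μ ⬝ᵥ f) ^ 2 := by
  have hμ : diagonal μ *ᵥ (fun _ => 1) = μ := by ext; simp [mulVec_diagonal]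
  rw [mul_vecMulVec, hμ, vecMulVec_mulVec]
  simp [dotProduct_comm f, sq]

lemma sum_sum_mul_sq_sub (P : Matrix ι ι ℝ) (μ f : ι → ℝ)
    (hstoch : ∀ i, ∑ j, P i j = 1) (hstat : ∀ j, ∑ i, μ i * P i j = μ j) :
    ∑ s, ∑ s', μ s * P s s' * (f s - f s') ^ 2
      = 2 * (∑ s, μ s * f s ^ 2 - ∑ s, ∑ s', μ s * P s s' * f s * f s') := by
  have hrow : ∑ s, ∑ s', μ s * P s s' * f s ^ 2 = ∑ s, μ s * f s ^ 2 := by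
    refine sum_congr rfl fun s _ => ?_
    rw [← sum_mul, ← mul_sum, hstoch, mul_one]
  have hcol : ∑ s, ∑ s', μ s * P s s' * f s' ^ 2 = ∑ s, μ s * f s ^ 2 := by
    rw [sum_comm]
    exact sum_congr rfl fun s _ => by rw [← sum_mul, hstat]
  calc ∑ s, ∑ s', μ s * P s s' * (f s - f s') ^ 2
      = ∑ s, ∑ s', μ s * P s s' * f s ^ 2 + ∑ s, ∑ s', μ s * P s s' * f s' ^ 2
        - 2 * ∑ s, ∑ s', μ s * P s s' * f s * f s' := by
        simp only [mul_sum, ← sum_add_distrib, ← sum_sub_distrib]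
        exact sum_congr rfl fun s _ => sum_congr rfl fun s' _ => by ring
    _ = _ := by rw [hrow, hcol]; ring

lemma dotProduct_diagonal_mul_one_sub_mulVec [DecidableEq ι] (P : Matrix ι ι ℝ) (μ f : ι → ℝ)
    (hstoch : ∀ i, ∑ j, P i j = 1) (hstat : ∀ j, ∑ i, μ i * P i j = μ j) :
    f ⬝ᵥ ((diagonal μ * (1 - P)) *ᵥ f) = dirichletForm P μ f := by
  have hdiag : f ⬝ᵥ (diagonal μ *ᵥ f) = ∑ s, μ s * f s ^ 2 :=
    sum_congr rfl fun s _ => by rw [mulVec_diagonal]; ring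
  have hP : f ⬝ᵥ ((diagonal μ * P) *ᵥ f) = ∑ s, ∑ s', μ s * P s s' * f s * f s' := by
    simp only [dotProduct, mulVec, diagonal_mul, mul_sum]
    exact sum_congr rfl fun s _ => sum_congr rfl fun s' _ => by ring
  rw [dirichletForm, sum_sum_mul_sq_sub P μ f hstoch hstat, mul_sub, sub_mulVec, Matrix.mul_one,
    dotProduct_sub, hdiag, hP]
  ring

theorem quadform_eq_dirichlet_plus_mean_general
    {n d : ℕ} (P : Matrix (Fin n) (Fin n) ℝ) (μ : Fin n → ℝ)
    (hstoch : ∀ i, ∑ j, P i j = 1)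
    (hstat : ∀ j, ∑ i, μ i * P i j = μ j)
    (Φ : Matrix (Fin n) (Fin d) ℝ) (x : Fin d → ℝ) :
    x ⬝ᵥ ((Φᵀ * Matrix.diagonal μ *
        (1 - (1 - Matrix.vecMulVec (fun _ : Fin n => (1 : ℝ)) μ) * P) * Φ).mulVec x)
    = (1 / 2) * (∑ s, ∑ s', μ s * P s s' * (Φ.mulVec x s - Φ.mulVec x s') ^ 2)
      + (∑ s, μ s * Φ.mulVec x s) ^ 2 := by
  have hA : 1 - (1 - vecMulVec (fun _ => (1 : ℝ)) μ) * P
      = (1 - P) + vecMulVec (fun _ => 1) μ := by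
    rw [one_sub_vecMulVec_mul_of_vecMul_eq P (funext hstat)]
    abel
  rw [hA, Matrix.mul_assoc Φᵀ, dotProduct_transpose_mul_mul_mulVec, Matrix.mul_add, add_mulVec,
    dotProduct_add, dotProduct_diagonal_mul_one_sub_mulVec P μ _ hstoch hstat,
    dotProduct_diagonal_mul_vecMulVec_one_mulVec]
  rfl

/-- For any `x ∈ ℝᵈ`,
`xᵀ Φᵀ D (I − Π P) Φ x = ‖Φx‖²_Dir + (μᵀΦx)²`, where `Π = I − eμᵀ` and the
Dirichlet seminorm is `‖f‖²_Dir = (1/2)Σ_{s,s'} μ(s)P(s'|s)(f(s)−f(s'))²`. -/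
theorem quadform_eq_dirichlet_plus_mean
    {n d : ℕ} (P : Matrix (Fin n) (Fin n) ℝ) (μ : Fin n → ℝ)
    (hPnonneg : ∀ i j, 0 ≤ P i j)
    (hstoch : ∀ i, ∑ j, P i j = 1)
    (hμpos : ∀ i, 0 < μ i) (hμsum : ∑ i, μ i = 1)
    (hstat : ∀ j, ∑ i, μ i * P i j = μ j)
    (Φ : Matrix (Fin n) (Fin d) ℝ) (x : Fin d → ℝ) :
    x ⬝ᵥ ((Φᵀ * Matrix.diagonal μ *
        (1 - (1 - Matrix.vecMulVec (fun _ : Fin n => (1 : ℝ)) μ) * P) * Φ).mulVec x)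
    = (1 / 2) * (∑ s, ∑ s', μ s * P s s' * (Φ.mulVec x s - Φ.mulVec x s') ^ 2)
      + (∑ s, μ s * Φ.mulVec x s) ^ 2 :=
  quadform_eq_dirichlet_plus_mean_general P μ hstoch hstat Φ x
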